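/- Let G be a finite connected graph with set of blocks 𝓑, let v be a cut vertex of G, and let (𝓘, α) be an independent blocks inequality. Then there exists a unique H ∈ 𝒦_v with ∑_{B ∈ 𝓑[H]} α_B = 1, and for every other H' ∈ 𝒦_v ∖ {H} one has ∑_{B ∈ 𝓑[H']} α_B = 0. -/

import Mathlib

/-!
Removing `v` sorts the blocks of `G` by the component of `G - v` containing them (a block minus
`v` is connected), and `𝓑[H]`, for the member `H` of `𝒦_v` built from a component `C`, is exactly
the fiber over `C`. Every edge lies in a block, so any union of fibers induces a connected
subgraph through `v`. An independent blocks inequality has total weight `1` and weight at most `1`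
on every connected set of blocks; as the complement of a fiber is a union of fibers, every fiber
has weight `1 - (weight of the complement) ≥ 0`. Nonnegative integers with sum `1` are a single
`1` and zeros.
-/

open Set

noncomputable section

namespace ConnectedBlocksPaper

variable {V : Type} [Fintype V] [DecidableEq V]

/-- A subgraph is 2-connected: at least 3 vertices and removing any vertex keeps it connected. -/
def IsTwoConnectedSub (G : SimpleGraph V) (H : G.Subgraph) : Prop :=
  3 ≤ H.verts.ncard ∧ ∀ v ∈ H.verts, (H.deleteVerts {v}).Connected

/-- A block of `G`: a maximal 2-connected subgraph, or a bridge together with its two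
incident vertices. -/
def IsBlock (G : SimpleGraph V) (B : G.Subgraph) : Prop :=
  (IsTwoConnectedSub G B ∧ ∀ B' : G.Subgraph, IsTwoConnectedSub G B' → B ≤ B' → B' = B)
  ∨ (∃ (u v : V) (h : G.Adj u v), G.IsBridge s(u, v) ∧ B = G.subgraphOfAdj h)

/-- The set `𝓑` of blocks of `G`, as a type. -/
abbrev Block (G : SimpleGraph V) := {B : G.Subgraph // IsBlock G B}

/-- The subgraph `G[𝓐]` induced by a set of blocks. -/
def blockUnion (G : SimpleGraph V) (𝓐 : Set (Block G)) : G.Subgraph :=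
  ⨆ B ∈ 𝓐, (B : G.Subgraph)

/-- `G[𝓐]` is connected (the empty set of blocks counts as connected). -/
def ConnBlocks (G : SimpleGraph V) (𝓐 : Set (Block G)) : Prop :=
  𝓐 = ∅ ∨ (blockUnion G 𝓐).Connected

/-- The incidence vector `χ^𝓐 ∈ {0,1}^𝓑` of a set of blocks `𝓐 ⊆ 𝓑`. -/
def incVec (G : SimpleGraph V) (𝓐 : Set (Block G)) : Block G → ℝ :=
  Set.indicator 𝓐 1

/-- The connected blocks polytope `CBP(G) ⊆ ℝ^𝓑`. -/
def CBP (G : SimpleGraph V) : Set (Block G → ℝ) :=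
  convexHull ℝ {x | ∃ 𝓐 : Set (Block G), ConnBlocks G 𝓐 ∧ x = incVec G 𝓐}

/-- `F` is a face of the convex set `P`. -/
def IsFaceOf {E : Type*} [AddCommGroup E] [Module ℝ E] (P F : Set E) : Prop :=
  F ⊆ P ∧ Convex ℝ F ∧
    ∀ x ∈ P, ∀ y ∈ P, ∀ t : ℝ, 0 < t → t < 1 →
      t • x + (1 - t) • y ∈ F → x ∈ F ∧ y ∈ F

/-- The dimension of a polytope: the dimension of its affine hull. -/
def polyDim {E : Type*} [AddCommGroup E] [Module ℝ E] (P : Set E) : ℕ :=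
  Module.finrank ℝ (affineSpan ℝ P).direction

/-- A facet is a face of dimension `dim P - 1`. -/
def IsFacetOf {E : Type*} [AddCommGroup E] [Module ℝ E] (P F : Set E) : Prop :=
  IsFaceOf P F ∧ polyDim F = polyDim P - 1

/-- `v` is a cut vertex of `G`: deleting `v` from the connected graph `G` leaves more than
one component. -/
def IsCutVertex (G : SimpleGraph V) (v : V) : Prop :=
  ¬ (G.induce ({v}ᶜ : Set V)).Preconnected

/-- `𝓑⟨𝓐⟩`: the smallest set of blocks inducing a connected subgraph and containing `𝓐`. -/
def blockClosure (G : SimpleGraph V) (𝓐 : Set (Block G)) : Set (Block G) :=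
  ⋂₀ {𝓒 : Set (Block G) | 𝓐 ⊆ 𝓒 ∧ ConnBlocks G 𝓒}

/-- An independent set of blocks: no two blocks share a common vertex. -/
def IndepBlocks (G : SimpleGraph V) (𝓘 : Set (Block G)) : Prop :=
  ∀ B₁ ∈ 𝓘, ∀ B₂ ∈ 𝓘, B₁ ≠ B₂ →
    ((B₁ : G.Subgraph).verts ∩ (B₂ : G.Subgraph).verts) = ∅

/-- `(𝓘, α)` is an independent blocks inequality. -/
def IsIBI (G : SimpleGraph V) (𝓘 : Set (Block G)) (α : Block G → ℤ) : Prop :=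
  IndepBlocks G 𝓘 ∧
  (∀ B, B ∉ blockClosure G 𝓘 → α B = 0) ∧
  (∀ B ∈ 𝓘, α B = 1) ∧
  (∀ B ∈ blockClosure G 𝓘 \ 𝓘, α B ≤ 0) ∧
  (∑ᶠ B ∈ blockClosure G 𝓘 \ 𝓘, α B = -((𝓘.ncard : ℤ) - 1)) ∧
  (∀ I ⊆ 𝓘, ∑ᶠ B ∈ blockClosure G I \ 𝓘, α B ≤ -((I.ncard : ℤ) - 1))

/-- `𝓑[H]`: the set of blocks (of `G`) of the subgraph `H`. -/
def blocksOf (G : SimpleGraph V) (H : G.Subgraph) : Set (Block G) :=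
  {B : Block G | (B : G.Subgraph) ≤ H}

/-- `𝒦_v`: the components of `G - v` with `v` (and its incident edges) added back. -/
def Kv (G : SimpleGraph V) (v : V) : Set G.Subgraph :=
  {H | ∃ C : (G.induce ({v}ᶜ : Set V)).ConnectedComponent,
        H = (⊤ : G.Subgraph).induce (Subtype.val '' C.supp ∪ {v})}

/-- A polytope is simple if every vertex lies in exactly `dim P` facets. -/
def IsSimplePolytope {E : Type*} [AddCommGroup E] [Module ℝ E] (P : Set E) : Prop :=
  ∀ x ∈ P.extremePoints ℝ, {F : Set E | IsFacetOf P F ∧ x ∈ F}.ncard = polyDim P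

/-- A simplex: the convex hull of an affinely independent finite set. -/
def IsSimplex {E : Type*} [AddCommGroup E] [Module ℝ E] (F : Set E) : Prop :=
  ∃ s : Finset E, AffineIndependent ℝ ((↑) : s → E) ∧ F = convexHull ℝ (s : Set E)

/-- A polytope is simplicial if every facet is a simplex. -/
def IsSimplicialPolytope {E : Type*} [AddCommGroup E] [Module ℝ E] (P : Set E) : Prop :=
  ∀ F : Set E, IsFacetOf P F → IsSimplex F

/-- The graph of a polytope: extreme points, adjacent when they span a 1-dimensional face. -/
def polyGraph {E : Type*} [AddCommGroup E] [Module ℝ E] (P : Set E) : SimpleGraph E where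
  Adj x y := x ≠ y ∧ x ∈ P.extremePoints ℝ ∧ y ∈ P.extremePoints ℝ ∧
    IsFaceOf P (segment ℝ x y) ∧ polyDim (segment ℝ x y) = 1
  symm := by
    constructor
    rintro x y ⟨hxy, hx, hy, hF, hd⟩
    exact ⟨hxy.symm, hy, hx, by rwa [segment_symm], by rwa [segment_symm]⟩
  loopless := by constructor; rintro x ⟨h, -⟩; exact h rfl

end ConnectedBlocksPaper

lemma finsum_mem_eq_sum_indicator {ι M : Type*} [Fintype ι] [AddCommMonoid M] (s : Set ι)
    (f : ι → M) : ∑ᶠ i ∈ s, f i = ∑ i, s.indicator f i := by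
  rw [finsum_mem_def, finsum_eq_sum_of_fintype]

lemma finsum_mem_one_eq_ncard {ι : Type*} [Finite ι] (s : Set ι) : ∑ᶠ i ∈ s, (1 : ℤ) = s.ncard := by
  rw [← finsum_one, Nat.cast_finsum_mem (Set.toFinite s), Nat.cast_one]

lemma finsum_fiberwise {ι κ M : Type*} [Finite ι] [Finite κ] [AddCommMonoid M] (f : ι → κ)
    (g : ι → M) : ∑ᶠ k, ∑ᶠ i ∈ f ⁻¹' {k}, g i = ∑ᶠ i, g i := by
  rw [← finsum_mem_iUnion (pairwise_disjoint_fiber f) fun _ => Set.toFinite _,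
    ← Set.preimage_iUnion, Set.iUnion_of_singleton, Set.preimage_univ, finsum_mem_univ]

lemma exists_eq_one_forall_ne_eq_zero_of_finsum_eq_one {ι : Type*} [Finite ι] {f : ι → ℤ}
    (hf : ∀ i, 0 ≤ f i) (h : ∑ᶠ i, f i = 1) : ∃ i, f i = 1 ∧ ∀ j ≠ i, f j = 0 := by
  classical
  have := Fintype.ofFinite ι
  rw [finsum_eq_sum_of_fintype] at h
  obtain ⟨i, -, hi⟩ : ∃ i ∈ Finset.univ, f i ≠ 0 := Finset.exists_ne_zero_of_sum_ne_zero (by omega)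
  have hsplit := Finset.add_sum_erase Finset.univ f (Finset.mem_univ i)
  have hrest : 0 ≤ ∑ j ∈ Finset.univ.erase i, f j := Finset.sum_nonneg fun j _ => hf j
  have hfi : f i = 1 := by have := hf i; omega
  refine ⟨i, hfi, fun j hj => ?_⟩
  exact (Finset.sum_eq_zero_iff_of_nonneg fun j _ => hf j).1 (by omega) j
    (Finset.mem_erase.2 ⟨hj, Finset.mem_univ j⟩)

namespace SimpleGraph

variable {V : Type*} {G : SimpleGraph V}

lemma Subgraph.connected_of_verts_eq_singleton {H : G.Subgraph} {w : V} (h : H.verts = {w}) :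
    H.Connected :=
  singletonSubgraph_connected.mono ((singletonSubgraph_le_iff w H).2 (by simp [h])) (by simp [h])

lemma Subgraph.Connected.connectedComponentMk_induce_eq {H : G.Subgraph} (hH : H.Connected)
    {s : Set V} (hs : H.verts ⊆ s) {x y : V} (hx : x ∈ H.verts) (hy : y ∈ H.verts) :
    (G.induce s).connectedComponentMk ⟨x, hs hx⟩ = (G.induce s).connectedComponentMk ⟨y, hs hy⟩ :=
  ConnectedComponent.sound
    ((hH.induce_verts.preconnected ⟨x, hx⟩ ⟨y, hy⟩).map (G.induceHomOfLE hs).toHom)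

lemma Subgraph.le_deleteVerts {H K : G.Subgraph} {s : Set V} (hle : H ≤ K)
    (hs : Disjoint H.verts s) : H ≤ K.deleteVerts s :=
  ⟨fun _ ha => ⟨hle.1 ha, hs.notMem_of_mem_left ha⟩, fun _ _ hab =>
    Subgraph.deleteVerts_adj.2 ⟨hle.1 (H.edge_vert hab), hs.notMem_of_mem_left (H.edge_vert hab),
      hle.1 (H.edge_vert hab.symm), hs.notMem_of_mem_left (H.edge_vert hab.symm), hle.2 hab⟩⟩

lemma Walk.IsCycle.connected_toSubgraph_deleteVerts_start {x : V} {c : G.Walk x x}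
    (hc : c.IsCycle) : (c.toSubgraph.deleteVerts {x}).Connected := by
  cases c with
  | nil => exact absurd hc Walk.not_isCycle_nil
  | @cons _ b _ h r =>
    have hr := ((Walk.cons_isCycle_iff r h).1 hc).1.reverse
    -- removing `x` from the cycle `x → b ⋯ z → x` leaves the path `q` from `z` to `b`
    obtain ⟨z, h', q, hq⟩ := Walk.exists_eq_cons_of_ne h.ne r.reverse
    rw [hq, Walk.cons_isPath_iff] at hr
    have hsub : (Walk.cons h r).toSubgraph =
        G.subgraphOfAdj h ⊔ (G.subgraphOfAdj h' ⊔ q.toSubgraph) := by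
      change G.subgraphOfAdj h ⊔ r.toSubgraph = _
      rw [← Walk.toSubgraph_reverse r, hq]; rfl
    refine q.toSubgraph_connected.mono (Subgraph.le_deleteVerts ?_ ?_) ?_
    · rw [hsub]; exact le_sup_right.trans le_sup_right
    · simpa [Walk.verts_toSubgraph] using hr.2
    · ext a
      simp only [hsub, Subgraph.deleteVerts_verts, Subgraph.verts_sup, Walk.verts_toSubgraph,
        subgraphOfAdj_verts, Set.mem_sdiff, Set.mem_union, Set.mem_insert_iff,
        Set.mem_singleton_iff, Set.mem_ofPred_eq]
      grind [q.start_mem_support, q.end_mem_support]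

end SimpleGraph

namespace ConnectedBlocksPaper

open SimpleGraph

section

variable {V : Type} {G : SimpleGraph V} {𝓘 : Set (Block G)} {α : Block G → ℤ}

lemma IsTwoConnectedSub.connected {B : G.Subgraph} (h : IsTwoConnectedSub G B) : B.Connected := by
  have h3 := h.1
  rw [Subgraph.connected_iff_forall_exists_walk_subgraph]
  refine ⟨Set.nonempty_of_ncard_ne_zero (by omega), fun {x y} hx hy => ?_⟩
  obtain ⟨w, hw, hwxy⟩ : ∃ w ∈ B.verts, w ∉ ({x, y} : Set V) :=
    Set.exists_mem_notMem_of_ncard_lt_ncard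
      ((Set.ncard_insert_le x {y}).trans_lt (by rw [Set.ncard_singleton]; omega))
  obtain ⟨p, hp⟩ := ((Subgraph.connected_iff_forall_exists_walk_subgraph _).1 (h.2 w hw)).2
    (u := x) (v := y) ⟨hx, by rintro rfl; simp at hwxy⟩ ⟨hy, by rintro rfl; simp at hwxy⟩
  exact ⟨p, hp.trans Subgraph.deleteVerts_le⟩

lemma IsBlock.one_lt_ncard_verts {B : G.Subgraph} (hB : IsBlock G B) : 1 < B.verts.ncard := by
  rcases hB with ⟨h, -⟩ | ⟨u, w, huw, -, rfl⟩
  · have := h.1; omega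
  · simp [Set.ncard_pair huw.ne]

lemma IsBlock.exists_mem_ne {B : G.Subgraph} (hB : IsBlock G B) (v : V) :
    ∃ x ∈ B.verts, x ≠ v :=
  Set.exists_ne_of_one_lt_ncard hB.one_lt_ncard_verts v

lemma IsBlock.connected {B : G.Subgraph} (hB : IsBlock G B) : B.Connected := by
  rcases hB with ⟨h, -⟩ | ⟨u, w, huw, -, rfl⟩
  · exact h.connected
  · exact Subgraph.subgraphOfAdj_connected huw

lemma IsBlock.connected_deleteVerts {B : G.Subgraph} (hB : IsBlock G B) (v : V) :
    (B.deleteVerts {v}).Connected := by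
  by_cases hv : v ∈ B.verts
  · rcases hB with ⟨h, -⟩ | ⟨u, w, huw, -, rfl⟩
    · exact h.2 v hv
    · obtain rfl | rfl : v = u ∨ v = w := by simpa using hv
      · exact Subgraph.connected_of_verts_eq_singleton (w := w) (by simp [huw.ne'])
      · exact Subgraph.connected_of_verts_eq_singleton (w := u) (by simp [huw.ne])
  · rw [← Subgraph.deleteVerts_inter_verts_left_eq, Set.inter_singleton_eq_empty.2 hv,
      Subgraph.deleteVerts_empty]
    exact hB.connected

/-- The component of `G - v` containing `B - v`, which is connected. -/
def blockComponent (v : V) (B : Block G) : (G.induce {v}ᶜ).ConnectedComponent :=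
  (G.induce {v}ᶜ).connectedComponentMk ⟨_, (B.2.exists_mem_ne v).choose_spec.2⟩

lemma connectedComponentMk_eq_blockComponent {v : V} (B : Block G) {x : V}
    (hx : x ∈ B.1.verts) (hxv : x ≠ v) :
    (G.induce {v}ᶜ).connectedComponentMk ⟨x, hxv⟩ = blockComponent v B :=
  (B.2.connected_deleteVerts v).connectedComponentMk_induce_eq (Set.sdiff_subset_compl _ _)
    ⟨hx, hxv⟩ (B.2.exists_mem_ne v).choose_spec

def componentSubgraph (v : V) (C : (G.induce {v}ᶜ).ConnectedComponent) : G.Subgraph :=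
  (⊤ : G.Subgraph).induce (Subtype.val '' C.supp ∪ {v})

lemma blocksOf_componentSubgraph (v : V) (C : (G.induce {v}ᶜ).ConnectedComponent) :
    blocksOf G (componentSubgraph v C) = blockComponent v ⁻¹' {C} := by
  ext B
  have hle : B.1 ≤ componentSubgraph v C ↔ B.1.verts ⊆ Subtype.val '' C.supp ∪ {v} :=
    ⟨fun h => h.1, fun h => Subgraph.le_induce_top_verts.trans (Subgraph.induce_mono_right h)⟩
  simp only [blocksOf, Set.mem_ofPred_eq, hle, Set.mem_preimage, Set.mem_singleton_iff]
  constructor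
  · intro hB
    obtain ⟨hx, hxv⟩ := (B.2.exists_mem_ne v).choose_spec
    rcases hB hx with ⟨y, hyC, hy⟩ | hx'
    · rw [← (C.mem_supp_iff y).1 hyC]
      exact (connectedComponentMk_eq_blockComponent B (hy ▸ hx) y.2).symm
    · exact absurd hx' hxv
  · rintro rfl x hx
    by_cases hxv : x = v
    · exact Or.inr hxv
    · exact Or.inl ⟨⟨x, hxv⟩, connectedComponentMk_eq_blockComponent B hx hxv, rfl⟩

lemma isTwoConnectedSub_toSubgraph_of_isCycle [DecidableEq V] {u : V} {c : G.Walk u u}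
    (hc : c.IsCycle) : IsTwoConnectedSub G c.toSubgraph := by
  refine ⟨?_, fun w hw => ?_⟩
  · have hcard : c.support.tail.toFinset.card = c.length := by
      rw [List.toFinset_card_of_nodup hc.support_nodup, List.length_tail, Walk.length_support]
      rfl
    rw [Walk.verts_toSubgraph, ← List.coe_toFinset, Set.ncard_coe_finset]
    calc 3 ≤ c.length := hc.three_le_length
      _ = c.support.tail.toFinset.card := hcard.symm
      _ ≤ c.support.toFinset.card :=
        Finset.card_le_card fun _ ha =>
          List.mem_toFinset.2 (List.mem_of_mem_tail (List.mem_toFinset.1 ha))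
  · rw [Walk.mem_verts_toSubgraph] at hw
    rw [← Walk.toSubgraph_rotate c hw]
    exact (hc.rotate hw).connected_toSubgraph_deleteVerts_start

lemma exists_block_adj [Finite V] {x y : V} (h : G.Adj x y) : ∃ B : Block G, B.1.Adj x y := by
  classical
  by_cases hbr : G.IsBridge s(x, y)
  · exact ⟨⟨G.subgraphOfAdj h, Or.inr ⟨x, y, h, hbr, rfl⟩⟩, by simp⟩
  obtain ⟨u, c, hc, he⟩ : ∃ u, ∃ c : G.Walk u u, c.IsCycle ∧ s(x, y) ∈ c.edges := by
    simpa [isBridge_iff_forall_cycle_notMem (G.mem_edgeSet.2 h)] using hbr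
  obtain ⟨M, ⟨hM, hcM⟩, hmax⟩ :=
    (Set.toFinite {B : G.Subgraph | IsTwoConnectedSub G B ∧ c.toSubgraph ≤ B}).exists_maximal
      ⟨_, isTwoConnectedSub_toSubgraph_of_isCycle hc, le_rfl⟩
  refine ⟨⟨M, Or.inl ⟨hM, fun B hB hMB => ?_⟩⟩, hcM.2 ?_⟩
  · exact le_antisymm (hmax ⟨hB, hcM.trans hMB⟩ hMB) hMB
  · rwa [← Subgraph.mem_edgeSet, Walk.mem_edges_toSubgraph]

lemma mem_blockUnion_verts {𝓐 : Set (Block G)} {a : V} :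
    a ∈ (blockUnion G 𝓐).verts ↔ ∃ B ∈ 𝓐, a ∈ B.1.verts := by
  simp [blockUnion, Subgraph.verts_iSup]

lemma le_blockUnion {𝓐 : Set (Block G)} {B : Block G} (hB : B ∈ 𝓐) : B.1 ≤ blockUnion G 𝓐 :=
  le_iSup₂ (f := fun (B : Block G) (_ : B ∈ 𝓐) => B.1) B hB

lemma exists_walk_toSubgraph_le_blockUnion [Finite V] (hG : G.Preconnected) {v : V}
    {C : (G.induce {v}ᶜ).ConnectedComponent} {𝓐 : Set (Block G)}
    (h𝓐 : blockComponent v ⁻¹' {C} ⊆ 𝓐) {a : V} (ha : a ≠ v)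
    (haC : (G.induce {v}ᶜ).connectedComponentMk ⟨a, ha⟩ = C) :
    ∃ p : G.Walk a v, p.toSubgraph ≤ blockUnion G 𝓐 := by
  suffices key : ∀ {x y : V} (p : G.Walk x y), y = v → ∀ hx : x ≠ v,
      (G.induce {v}ᶜ).connectedComponentMk ⟨x, hx⟩ = C →
        ∃ q : G.Walk x v, q.toSubgraph ≤ blockUnion G 𝓐 from
    key (hG a v).some rfl ha haC
  intro x y p
  induction p with
  | nil => exact fun hy hx => absurd hy hx
  | @cons x z y hxz p ih =>
    intro hy hx hxC
    obtain ⟨B, hB⟩ := exists_block_adj hxz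
    have hBC : blockComponent v B = C :=
      (connectedComponentMk_eq_blockComponent B (B.1.edge_vert hB) hx).symm.trans hxC
    have hxzU : G.subgraphOfAdj hxz ≤ blockUnion G 𝓐 :=
      subgraphOfAdj_le_of_adj _ ((le_blockUnion (h𝓐 hBC)).2 hB)
    by_cases hz : z = v
    · subst hz
      exact ⟨Walk.cons hxz Walk.nil, by simpa using hxzU⟩
    · have hzC : (G.induce {v}ᶜ).connectedComponentMk ⟨z, hz⟩ = C :=
        (ConnectedComponent.sound (show (G.induce {v}ᶜ).Adj ⟨z, hz⟩ ⟨x, hx⟩ from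
          hxz.symm).reachable).trans hxC
      obtain ⟨q, hq⟩ := ih hy hz hzC
      exact ⟨Walk.cons hxz q, sup_le hxzU hq⟩

lemma connBlocks_preimage_blockComponent [Finite V] (hG : G.Preconnected) (v : V)
    (S : Set (G.induce {v}ᶜ).ConnectedComponent) : ConnBlocks G (blockComponent v ⁻¹' S) := by
  rcases (blockComponent v ⁻¹' S).eq_empty_or_nonempty with h | ⟨B₀, hB₀⟩
  · exact Or.inl h
  right
  set U := blockUnion G (blockComponent v ⁻¹' S)
  have walk_ne : ∀ a ∈ U.verts, a ≠ v → ∃ p : G.Walk a v, p.toSubgraph ≤ U := by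
    intro a ha hav
    obtain ⟨B, hB, haB⟩ := mem_blockUnion_verts.1 ha
    exact exists_walk_toSubgraph_le_blockUnion hG
      (Set.preimage_mono (Set.singleton_subset_iff.2 hB)) hav
      (connectedComponentMk_eq_blockComponent B haB hav)
  have hv : v ∈ U.verts := by
    obtain ⟨x, hx, hxv⟩ := B₀.2.exists_mem_ne v
    obtain ⟨p, hp⟩ := walk_ne x ((le_blockUnion hB₀).1 hx) hxv
    exact hp.1 p.end_mem_verts_toSubgraph
  have walk : ∀ a ∈ U.verts, ∃ p : G.Walk a v, p.toSubgraph ≤ U := by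
    intro a ha
    by_cases hav : a = v
    · subst hav
      exact ⟨Walk.nil, by simpa using hv⟩
    · exact walk_ne a ha hav
  rw [Subgraph.connected_iff_forall_exists_walk_subgraph]
  refine ⟨⟨v, hv⟩, fun {a b} ha hb => ?_⟩
  obtain ⟨p, hp⟩ := walk a ha
  obtain ⟨q, hq⟩ := walk b hb
  exact ⟨p.append q.reverse, by
    rw [Walk.toSubgraph_append, Walk.toSubgraph_reverse]; exact sup_le hp hq⟩

lemma blockClosure_subset {𝓐 𝓒 : Set (Block G)} (h : 𝓐 ⊆ 𝓒) (h𝓒 : ConnBlocks G 𝓒) :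
    blockClosure G 𝓐 ⊆ 𝓒 :=
  Set.sInter_subset_of_mem ⟨h, h𝓒⟩

lemma IsIBI.nonpos_of_notMem (h : IsIBI G 𝓘 α) {B : Block G} (hB : B ∉ 𝓘) : α B ≤ 0 := by
  by_cases hA : B ∈ blockClosure G 𝓘
  · exact h.2.2.2.1 B ⟨hA, hB⟩
  · exact (h.2.1 B hA).le

lemma IsIBI.finsum_eq_one [Finite V] (h : IsIBI G 𝓘 α) : ∑ᶠ B, α B = 1 := by
  have := Fintype.ofFinite (Block G)
  obtain ⟨-, hzero, hone, -, hsum, -⟩ := h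
  have hα : ∀ B, α B = 𝓘.indicator 1 B + (blockClosure G 𝓘 \ 𝓘).indicator α B := by
    intro B
    by_cases hI : B ∈ 𝓘
    · simp [hI, hone B hI]
    · by_cases hA : B ∈ blockClosure G 𝓘
      · simp [hI, hA]
      · simp [hI, hA, hzero B hA]
  rw [finsum_eq_sum_of_fintype, Finset.sum_congr rfl fun B _ => hα B, Finset.sum_add_distrib,
    ← finsum_mem_eq_sum_indicator, ← finsum_mem_eq_sum_indicator, hsum]
  simp only [Pi.one_apply, finsum_mem_one_eq_ncard]
  ring

lemma IsIBI.finsum_mem_le_one [Finite V] (h : IsIBI G 𝓘 α) {s : Set (Block G)}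
    (hs : ConnBlocks G s) : ∑ᶠ B ∈ s, α B ≤ 1 := by
  have := Fintype.ofFinite (Block G)
  set I := s ∩ 𝓘
  have hIs : blockClosure G I ⊆ s := blockClosure_subset Set.inter_subset_left hs
  -- `α ≤ 0` off `𝓘` and `𝓑⟨s ∩ 𝓘⟩ ⊆ s`
  have hle : ∀ B, s.indicator α B ≤ I.indicator 1 B + (blockClosure G I \ 𝓘).indicator α B := by
    intro B
    by_cases hI : B ∈ 𝓘
    · by_cases hBs : B ∈ s
      · simp [I, hBs, hI, h.2.2.1 B hI]
      · simp [I, hBs, hI]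
    · by_cases hC : B ∈ blockClosure G I
      · simp [I, hI, hC, hIs hC]
      · by_cases hBs : B ∈ s
        · simp [I, hI, hC, hBs, h.nonpos_of_notMem hI]
        · simp [I, hI, hC, hBs]
  calc ∑ᶠ B ∈ s, α B = ∑ B, s.indicator α B := finsum_mem_eq_sum_indicator _ _
    _ ≤ ∑ B, (I.indicator 1 B + (blockClosure G I \ 𝓘).indicator α B) :=
      Finset.sum_le_sum fun B _ => hle B
    _ = I.ncard + ∑ᶠ B ∈ blockClosure G I \ 𝓘, α B := by
      rw [Finset.sum_add_distrib, ← finsum_mem_eq_sum_indicator, ← finsum_mem_eq_sum_indicator]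
      simp only [Pi.one_apply, finsum_mem_one_eq_ncard]
    _ ≤ 1 := by linarith [h.2.2.2.2.2 I Set.inter_subset_right]

lemma IsIBI.finsum_mem_nonneg [Finite V] (h : IsIBI G 𝓘 α) {s : Set (Block G)}
    (hs : ConnBlocks G sᶜ) : 0 ≤ ∑ᶠ B ∈ s, α B := by
  have hsplit : ∑ᶠ B ∈ s, α B + ∑ᶠ B ∈ sᶜ, α B = 1 := by
    rw [← finsum_mem_union disjoint_compl_right (Set.toFinite _) (Set.toFinite _),
      Set.union_compl_self, finsum_mem_univ, h.finsum_eq_one]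
  linarith [h.finsum_mem_le_one hs]

end

variable {V : Type} [Fintype V] [DecidableEq V]

theorem ibi_component_weight_general (G : SimpleGraph V) (hG : G.Connected)
    (v : V) (𝓘 : Set (Block G)) (α : Block G → ℤ) (h : IsIBI G 𝓘 α) :
    ∃ H ∈ Kv G v, (∑ᶠ B ∈ blocksOf G H, α B) = 1 ∧
      ∀ H' ∈ Kv G v, H' ≠ H → (∑ᶠ B ∈ blocksOf G H', α B) = 0 := by
  have hfiber_nonneg (C : (G.induce {v}ᶜ).ConnectedComponent) :
      0 ≤ ∑ᶠ B ∈ blockComponent v ⁻¹' {C}, α B :=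
    h.finsum_mem_nonneg (by
      rw [← Set.preimage_compl]; exact connBlocks_preimage_blockComponent hG.preconnected v _)
  obtain ⟨C₀, hC₀, hC⟩ := exists_eq_one_forall_ne_eq_zero_of_finsum_eq_one hfiber_nonneg
    ((finsum_fiberwise _ α).trans h.finsum_eq_one)
  refine ⟨componentSubgraph v C₀, ⟨C₀, rfl⟩, by rwa [blocksOf_componentSubgraph], ?_⟩
  rintro _ ⟨C, rfl⟩ hne
  rw [← componentSubgraph, blocksOf_componentSubgraph]
  exact hC C (by rintro rfl; exact hne rfl)

/-- for a cut vertex `v` and an independent blocks inequality `(𝓘, α)` there is a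
unique `H ∈ 𝒦_v` with `∑_{B ∈ 𝓑[H]} α_B = 1`, and any other `H' ∈ 𝒦_v` has
`∑_{B ∈ 𝓑[H']} α_B = 0`. -/
theorem ibi_component_weight (G : SimpleGraph V) (hG : G.Connected)
    (v : V) (hv : IsCutVertex G v)
    (𝓘 : Set (Block G)) (α : Block G → ℤ) (h : IsIBI G 𝓘 α) :
    ∃ H ∈ Kv G v, (∑ᶠ B ∈ blocksOf G H, α B) = 1 ∧
      ∀ H' ∈ Kv G v, H' ≠ H → (∑ᶠ B ∈ blocksOf G H', α B) = 0 :=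
  ibi_component_weight_general G hG v 𝓘 α h

end ConnectedBlocksPaper
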